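/- arXiv:1208.0306 — 10 statements merged into one kernel-verified Lean document; each statement's English description precedes it below -/
import Mathlib

section
/- For all integers n ≥ 2, all k with 1 ≤ k ≤ n−1, and all k₁ with 0 ≤ k₁ ≤ k−1, the coefficients c satisfy the identity ∑_{l=k₁+1}^{n−(k−k₁)} C(n,l) · c(k₁, l) · c(k−k₁−1, n−l) = c(k, n), where C(n,l) denotes the binomial coefficient. -/
/-!
For `n ≥ 1`, `c k n` counts ordered partitions of an `n`-set into `k + 1` nonempty blocks, and the
identity splits such a partition after its first `k₁ + 1` blocks, whose union has `l` elements.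
Algebraically, induct on the number of leading blocks: peel off the first block with the
recursion and exchange the double sum by `(l, i) ↦ (l + i, i)`, the binomial weights matching by
`C(n, l) C(n - l, i) = C(n, l + i) C(l + i, i)`.
-/

/-- The coefficients `c k n` defined by `c 0 n = 1` and the recursion
`c k n = ∑_{i=1}^{n-k} C(n,i) c (k-1) (n-i)`. -/
def c : ℕ → ℕ → ℕ
  | 0, _ => 1
  | k + 1, n => ∑ i ∈ Finset.Icc 1 (n - (k + 1)), Nat.choose n i * c k (n - i)

open Finset

lemma choose_mul_choose_sub_eq (n l i : ℕ) :
    n.choose l * (n - l).choose i = n.choose (l + i) * (l + i).choose i := by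
  rw [← Nat.choose_symm_add, Nat.choose_mul (Nat.le_add_right l i), Nat.add_sub_cancel_left]

theorem c_add_add_one (a b n : ℕ) :
    c (a + b + 1) n = ∑ l ∈ Icc (a + 1) (n - (b + 1)), n.choose l * c a l * c b (n - l) := by
  induction a generalizing b with
  | zero => simp only [Nat.zero_add, c, mul_one]
  | succ a ih =>
    calc c (a + 1 + b + 1) n
        = ∑ l ∈ Icc (a + 1) (n - (b + 2)), n.choose l * c a l * c (b + 1) (n - l) := by
          rw [show a + 1 + b + 1 = a + (b + 1) + 1 by ring, ih]
      _ = ∑ p ∈ (Icc (a + 1) (n - (b + 2))).sigma fun l => Icc 1 (n - l - (b + 1)),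
            n.choose p.1 * (n - p.1).choose p.2 * c a p.1 * c b (n - p.1 - p.2) := by
          rw [sum_sigma]
          refine sum_congr rfl fun l _ => ?_
          simp only [c, mul_sum]
          exact sum_congr rfl fun i _ => by ring
      _ = ∑ p ∈ (Icc (a + 2) (n - (b + 1))).sigma fun m => Icc 1 (m - (a + 1)),
            n.choose p.1 * p.1.choose p.2 * c a (p.1 - p.2) * c b (n - p.1) := by
          refine sum_nbij' (fun p => ⟨p.1 + p.2, p.2⟩) (fun q => ⟨q.1 - q.2, q.2⟩)
            ?_ ?_ ?_ ?_ ?_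
          · rintro ⟨l, i⟩ hp
            simp only [mem_sigma, mem_Icc] at hp ⊢
            omega
          · rintro ⟨m, j⟩ hq
            simp only [mem_sigma, mem_Icc] at hq ⊢
            omega
          · rintro ⟨l, i⟩ -
            simp
          · rintro ⟨m, j⟩ hq
            simp only [mem_sigma, mem_Icc] at hq
            simp only [Sigma.mk.injEq, heq_eq_eq, and_true]
            omega
          · rintro ⟨l, i⟩ -
            simp only [Nat.add_sub_cancel, Nat.sub_sub, choose_mul_choose_sub_eq n l i]
      _ = ∑ m ∈ Icc (a + 1 + 1) (n - (b + 1)), n.choose m * c (a + 1) m * c b (n - m) := by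
          rw [sum_sigma]
          refine sum_congr rfl fun m _ => ?_
          simp only [c, mul_sum, sum_mul]
          exact sum_congr rfl fun j _ => by ring

theorem combinatorial_identity_general (n : ℕ) (k : ℕ) (hk1 : 1 ≤ k)
    (k₁ : ℕ) (hk₁ : k₁ ≤ k - 1) :
    ∑ l ∈ Finset.Icc (k₁ + 1) (n - (k - k₁)),
        Nat.choose n l * c k₁ l * c (k - k₁ - 1) (n - l) = c k n := by
  obtain ⟨b, rfl⟩ : ∃ b, k = k₁ + b + 1 := ⟨k - k₁ - 1, by omega⟩
  rw [c_add_add_one, show k₁ + b + 1 - k₁ - 1 = b by omega, show k₁ + b + 1 - k₁ = b + 1 by omega]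

theorem combinatorial_identity (n : ℕ) (hn : 2 ≤ n) (k : ℕ) (hk1 : 1 ≤ k) (hk2 : k ≤ n - 1)
    (k₁ : ℕ) (hk₁ : k₁ ≤ k - 1) :
    ∑ l ∈ Finset.Icc (k₁ + 1) (n - (k - k₁)),
        Nat.choose n l * c k₁ l * c (k - k₁ - 1) (n - l) = c k n :=
  combinatorial_identity_general n k hk1 k₁ hk₁
end

section
/- For every k ∈ ℕ and all 0 ≤ l₁ ≤ l₂ such that E[X^k e^{l₂X}] < ∞ and E[e^{l₂X}] < ∞, one has G(l₁,k) ≤ G(l₂,k); that is, for fixed k the map l ↦ G(l,k) is nondecreasing in l. -/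
open MeasureTheory

/-- Monotonicity in `l` of `G(l,k) = E[X^k e^{lX}] / E[e^{lX}]` for a nonnegative random
variable `X`: for `0 ≤ l₁ ≤ l₂`, `G(l₁,k) ≤ G(l₂,k)`. -/
theorem monotone_in_l {Ω : Type*} [MeasurableSpace Ω] (P : Measure Ω)
    [IsProbabilityMeasure P] (X : Ω → ℝ) (hX : Measurable X) (hXnn : ∀ ω, 0 ≤ X ω)
    (k : ℕ) (l₁ l₂ : ℝ) (hl₁ : 0 ≤ l₁) (hl₁₂ : l₁ ≤ l₂)
    (hint : Integrable (fun ω => X ω ^ k * Real.exp (l₂ * X ω)) P)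
    (hexp : Integrable (fun ω => Real.exp (l₂ * X ω)) P) :
    (∫ ω, X ω ^ k * Real.exp (l₁ * X ω) ∂P) / (∫ ω, Real.exp (l₁ * X ω) ∂P) ≤
      (∫ ω, X ω ^ k * Real.exp (l₂ * X ω) ∂P) / ∫ ω, Real.exp (l₂ * X ω) ∂P := by
  -- integrability for l₁ by domination
  have hexp1 : Integrable (fun ω => Real.exp (l₁ * X ω)) P := by
    refine hexp.mono' ((hX.const_mul l₁).exp.aestronglyMeasurable) ?_
    filter_upwards with ω
    rw [Real.norm_eq_abs, abs_of_pos (Real.exp_pos _)]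
    exact Real.exp_le_exp.2 (mul_le_mul_of_nonneg_right hl₁₂ (hXnn ω))
  have hint1 : Integrable (fun ω => X ω ^ k * Real.exp (l₁ * X ω)) P := by
    refine hint.mono' (((hX.pow_const k).mul (hX.const_mul l₁).exp).aestronglyMeasurable) ?_
    filter_upwards with ω
    rw [Real.norm_eq_abs, abs_of_nonneg (mul_nonneg (pow_nonneg (hXnn ω) k) (Real.exp_pos _).le)]
    exact mul_le_mul_of_nonneg_left
      (Real.exp_le_exp.2 (mul_le_mul_of_nonneg_right hl₁₂ (hXnn ω)))
      (pow_nonneg (hXnn ω) k)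
  set A₁ := ∫ ω, X ω ^ k * Real.exp (l₁ * X ω) ∂P
  set A₂ := ∫ ω, X ω ^ k * Real.exp (l₂ * X ω) ∂P
  set B₁ := ∫ ω, Real.exp (l₁ * X ω) ∂P
  set B₂ := ∫ ω, Real.exp (l₂ * X ω) ∂P
  have hB₁ : 0 < B₁ := integral_exp_pos hexp1
  have hB₂ : 0 < B₂ := integral_exp_pos hexp
  rw [div_le_div_iff₀ hB₁ hB₂]
  -- Key: symmetrization over P × P
  have hkey : A₁ * B₂ - A₂ * B₁ ≤ 0 := by
    have h1 : Integrable (fun p : Ω × Ω =>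
        (X p.1 ^ k * Real.exp (l₁ * X p.1)) * Real.exp (l₂ * X p.2)) (P.prod P) :=
      hint1.mul_prod hexp
    have h2 : Integrable (fun p : Ω × Ω =>
        (X p.1 ^ k * Real.exp (l₂ * X p.1)) * Real.exp (l₁ * X p.2)) (P.prod P) :=
      hint.mul_prod hexp1
    have h3 : Integrable (fun p : Ω × Ω =>
        Real.exp (l₁ * X p.1) * (X p.2 ^ k * Real.exp (l₂ * X p.2))) (P.prod P) :=
      hexp1.mul_prod hint
    have h4 : Integrable (fun p : Ω × Ω =>
        Real.exp (l₂ * X p.1) * (X p.2 ^ k * Real.exp (l₁ * X p.2))) (P.prod P) :=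
      hexp.mul_prod hint1
    have hval : ∫ p : Ω × Ω, ((X p.1 ^ k * Real.exp (l₁ * X p.1)) * Real.exp (l₂ * X p.2)
        - (X p.1 ^ k * Real.exp (l₂ * X p.1)) * Real.exp (l₁ * X p.2)
        - Real.exp (l₁ * X p.1) * (X p.2 ^ k * Real.exp (l₂ * X p.2))
        + Real.exp (l₂ * X p.1) * (X p.2 ^ k * Real.exp (l₁ * X p.2))) ∂(P.prod P)
        = A₁ * B₂ - A₂ * B₁ - B₁ * A₂ + B₂ * A₁ := by
      have h12 : Integrable (fun p : Ω × Ω =>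
          (X p.1 ^ k * Real.exp (l₁ * X p.1)) * Real.exp (l₂ * X p.2)
          - (X p.1 ^ k * Real.exp (l₂ * X p.1)) * Real.exp (l₁ * X p.2)) (P.prod P) :=
        h1.sub h2
      have h123 : Integrable (fun p : Ω × Ω =>
          (X p.1 ^ k * Real.exp (l₁ * X p.1)) * Real.exp (l₂ * X p.2)
          - (X p.1 ^ k * Real.exp (l₂ * X p.1)) * Real.exp (l₁ * X p.2)
          - Real.exp (l₁ * X p.1) * (X p.2 ^ k * Real.exp (l₂ * X p.2))) (P.prod P) :=
        h12.sub h3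
      rw [integral_add h123 h4, integral_sub h12 h3,
        integral_sub h1 h2,
        integral_prod_mul (fun ω => X ω ^ k * Real.exp (l₁ * X ω))
          (fun ω => Real.exp (l₂ * X ω)),
        integral_prod_mul (fun ω => X ω ^ k * Real.exp (l₂ * X ω))
          (fun ω => Real.exp (l₁ * X ω)),
        integral_prod_mul (fun ω => Real.exp (l₁ * X ω))
          (fun ω => X ω ^ k * Real.exp (l₂ * X ω)),
        integral_prod_mul (fun ω => Real.exp (l₂ * X ω))
          (fun ω => X ω ^ k * Real.exp (l₁ * X ω))]
    have hnonpos : ∫ p : Ω × Ω, ((X p.1 ^ k * Real.exp (l₁ * X p.1)) * Real.exp (l₂ * X p.2)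
        - (X p.1 ^ k * Real.exp (l₂ * X p.1)) * Real.exp (l₁ * X p.2)
        - Real.exp (l₁ * X p.1) * (X p.2 ^ k * Real.exp (l₂ * X p.2))
        + Real.exp (l₂ * X p.1) * (X p.2 ^ k * Real.exp (l₁ * X p.2))) ∂(P.prod P) ≤ 0 := by
      refine integral_nonpos fun p => ?_
      have hx := hXnn p.1
      have hy := hXnn p.2
      have hfactor : X p.1 ^ k * Real.exp (l₁ * X p.1) * Real.exp (l₂ * X p.2)
          - X p.1 ^ k * Real.exp (l₂ * X p.1) * Real.exp (l₁ * X p.2)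
          - Real.exp (l₁ * X p.1) * (X p.2 ^ k * Real.exp (l₂ * X p.2))
          + Real.exp (l₂ * X p.1) * (X p.2 ^ k * Real.exp (l₁ * X p.2))
          = (X p.1 ^ k - X p.2 ^ k) *
            (Real.exp (l₁ * X p.1 + l₂ * X p.2) - Real.exp (l₂ * X p.1 + l₁ * X p.2)) := by
        rw [Real.exp_add, Real.exp_add]; ring
      rw [hfactor]
      rcases le_total (X p.1) (X p.2) with h | h
      · exact mul_nonpos_of_nonpos_of_nonneg
          (sub_nonpos.2 (pow_le_pow_left₀ hx h k))
          (sub_nonneg.2 (Real.exp_le_exp.2 (by nlinarith)))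
      · exact mul_nonpos_of_nonneg_of_nonpos
          (sub_nonneg.2 (pow_le_pow_left₀ hy h k))
          (sub_nonpos.2 (Real.exp_le_exp.2 (by nlinarith)))
    nlinarith [hval ▸ hnonpos]
  linarith
end

section
/- Assume additionally that X is bounded, i.e. 0 ≤ X ≤ M almost surely for some M < ∞. Then for every k ∈ ℕ and every l ∈ [0,∞), the function l ↦ G(l,k) is differentiable at l with derivative ∂_l G(l,k) = G(l,k+1) − G(l,1) · G(l,k), and this derivative is nonnegative. -/
open MeasureTheory ProbabilityTheory Real

/-!
Boundedness of `X` makes `t ↦ E[X^k e^{tX}]` differentiable everywhere with derivative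
`E[X^{k+1} e^{tX}]`, so the quotient rule gives the derivative of `G(·,k)`. Its sign is that of
`E[X^{k+1} e^{lX}] E[e^{lX}] - E[X e^{lX}] E[X^k e^{lX}]`, which is half the integral of
`(X(ω) - X(ω')) (X(ω)^k - X(ω')^k) e^{lX(ω)} e^{lX(ω')}` over `P ⊗ P`: a weighted Chebyshev
sum inequality, nonnegative because `x ↦ x^k` is monotone on `[0, ∞)`.
-/

section

variable {Ω : Type*} [MeasurableSpace Ω] {μ : Measure Ω}

theorem integrableExpSet_eq_univ_of_ae_mem_Icc [IsFiniteMeasure μ] {X : Ω → ℝ} {a b : ℝ}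
    (hX : AEMeasurable X μ) (h : ∀ᵐ ω ∂μ, X ω ∈ Set.Icc a b) :
    integrableExpSet X μ = Set.univ := by
  refine Set.eq_univ_of_forall fun t => ?_
  refine Integrable.of_bound (measurable_exp.comp_aemeasurable (hX.const_mul t)).aestronglyMeasurable
    (exp (|t| * max |a| |b|)) ?_
  filter_upwards [h] with ω hω
  rw [norm_of_nonneg (exp_pos _).le, exp_le_exp]
  calc t * X ω ≤ |t| * |X ω| := (le_abs_self _).trans (abs_mul _ _).le
    _ ≤ |t| * max |a| |b| := by gcongr; exact abs_le_max_abs_abs hω.1 hω.2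

theorem integral_mul_integral_le_of_monovaryOn [SFinite μ] {w f g : Ω → ℝ} {s : Set Ω}
    (hfg : MonovaryOn f g s) (hs : ∀ᵐ ω ∂μ, ω ∈ s) (hw : 0 ≤ᵐ[μ] w) (hw_int : Integrable w μ)
    (hf_int : Integrable (fun ω => f ω * w ω) μ) (hg_int : Integrable (fun ω => g ω * w ω) μ)
    (hfg_int : Integrable (fun ω => f ω * g ω * w ω) μ) :
    (∫ ω, f ω * w ω ∂μ) * (∫ ω, g ω * w ω ∂μ) ≤ (∫ ω, f ω * g ω * w ω ∂μ) * ∫ ω, w ω ∂μ := by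
  have hsw : ∀ᵐ ω ∂μ, ω ∈ s ∧ 0 ≤ w ω := hs.and hw
  have hsw₂ : ∀ᵐ p ∂μ.prod μ, (p.1 ∈ s ∧ 0 ≤ w p.1) ∧ (p.2 ∈ s ∧ 0 ≤ w p.2) :=
    (Measure.quasiMeasurePreserving_fst.ae hsw).and (Measure.quasiMeasurePreserving_snd.ae hsw)
  have hnonneg : 0 ≤ ∫ p : Ω × Ω, (f p.1 - f p.2) * (g p.1 - g p.2) * (w p.1 * w p.2) ∂μ.prod μ := by
    refine integral_nonneg_of_ae ?_
    filter_upwards [hsw₂] with p ⟨⟨h₁, hw₁⟩, ⟨h₂, hw₂⟩⟩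
    exact mul_nonneg (hfg.sub_mul_sub_nonneg h₂ h₁) (mul_nonneg hw₁ hw₂)
  have hexpand : (fun p : Ω × Ω => (f p.1 - f p.2) * (g p.1 - g p.2) * (w p.1 * w p.2)) =
      fun p => (f p.1 * g p.1 * w p.1) * w p.2 + w p.1 * (f p.2 * g p.2 * w p.2)
        - ((f p.1 * w p.1) * (g p.2 * w p.2) + (g p.1 * w p.1) * (f p.2 * w p.2)) := by
    ext p; ring
  have hprod {u v : Ω → ℝ} (hu : Integrable u μ) (hv : Integrable v μ) :
      Integrable (fun p : Ω × Ω => u p.1 * v p.2) (μ.prod μ) :=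
    hu.mul_prod hv
  rw [hexpand, integral_sub, integral_add, integral_add,
    integral_prod_mul (fun ω => f ω * g ω * w ω) w, integral_prod_mul w (fun ω => f ω * g ω * w ω),
    integral_prod_mul (fun ω => f ω * w ω) (fun ω => g ω * w ω),
    integral_prod_mul (fun ω => g ω * w ω) (fun ω => f ω * w ω)] at hnonneg
  · linarith
  · exact hprod hf_int hg_int
  · exact hprod hg_int hf_int
  · exact hprod hfg_int hw_int
  · exact hprod hw_int hfg_int
  · exact (hprod hfg_int hw_int).add (hprod hw_int hfg_int)
  · exact (hprod hf_int hg_int).add (hprod hg_int hf_int)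

end

theorem deriv_in_l_general {Ω : Type*} [MeasurableSpace Ω] (P : Measure Ω)
    [IsProbabilityMeasure P] (X : Ω → ℝ) (hX : Measurable X)
    (M : ℝ) (hbdd : ∀ᵐ ω ∂P, 0 ≤ X ω ∧ X ω ≤ M)
    (k : ℕ) (l : ℝ) :
    HasDerivAt
        (fun s : ℝ =>
          (∫ ω, X ω ^ k * Real.exp (s * X ω) ∂P) / ∫ ω, Real.exp (s * X ω) ∂P)
        ((∫ ω, X ω ^ (k + 1) * Real.exp (l * X ω) ∂P) / (∫ ω, Real.exp (l * X ω) ∂P) -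
          ((∫ ω, X ω ^ 1 * Real.exp (l * X ω) ∂P) / (∫ ω, Real.exp (l * X ω) ∂P)) *
            ((∫ ω, X ω ^ k * Real.exp (l * X ω) ∂P) / (∫ ω, Real.exp (l * X ω) ∂P))) l ∧
      0 ≤ (∫ ω, X ω ^ (k + 1) * Real.exp (l * X ω) ∂P) / (∫ ω, Real.exp (l * X ω) ∂P) -
          ((∫ ω, X ω ^ 1 * Real.exp (l * X ω) ∂P) / (∫ ω, Real.exp (l * X ω) ∂P)) *
            ((∫ ω, X ω ^ k * Real.exp (l * X ω) ∂P) / (∫ ω, Real.exp (l * X ω) ∂P)) := by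
  have hl : l ∈ interior (integrableExpSet X P) := by
    simp [integrableExpSet_eq_univ_of_ae_mem_Icc hX.aemeasurable hbdd]
  have hint := integrable_pow_mul_exp_of_mem_interior_integrableExpSet hl
  have hN := hasDerivAt_integral_pow_mul_exp_real hl k
  have hZ := hasDerivAt_integral_pow_mul_exp_real hl 0
  simp only [pow_zero, one_mul, zero_add] at hZ
  have hZ_pos : 0 < ∫ ω, exp (l * X ω) ∂P := mgf_pos (by simpa using hint 0)
  have hcheb := integral_mul_integral_le_of_monovaryOn (s := {ω | 0 ≤ X ω})
    (f := fun ω => X ω ^ k) (g := X)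
    (fun i hi j _ hij => pow_le_pow_left₀ hi hij.le k) (hbdd.mono fun _ h => h.1)
    (ae_of_all _ fun _ => (exp_pos _).le) (by simpa using hint 0) (hint k)
    (by simpa using hint 1) (by simpa only [← pow_succ] using hint (k + 1))
  simp only [← pow_succ] at hcheb
  refine ⟨(hN.div hZ hZ_pos.ne').congr_deriv (by field_simp), ?_⟩
  rw [sub_nonneg, div_mul_div_comm, div_le_div_iff₀ (by positivity) hZ_pos]
  simp only [pow_one]
  linarith [mul_le_mul_of_nonneg_right hcheb hZ_pos.le]

/-- For a bounded nonnegative random variable `X`, the map `l ↦ G(l,k)` with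
`G(l,k) = E[X^k e^{lX}] / E[e^{lX}]` is differentiable with derivative
`∂_l G(l,k) = G(l,k+1) − G(l,1) G(l,k)`, which is nonnegative. -/
theorem deriv_in_l {Ω : Type*} [MeasurableSpace Ω] (P : Measure Ω)
    [IsProbabilityMeasure P] (X : Ω → ℝ) (hX : Measurable X)
    (M : ℝ) (hbdd : ∀ᵐ ω ∂P, 0 ≤ X ω ∧ X ω ≤ M)
    (k : ℕ) (l : ℝ) (hl : 0 ≤ l) :
    HasDerivAt
        (fun s : ℝ =>
          (∫ ω, X ω ^ k * Real.exp (s * X ω) ∂P) / ∫ ω, Real.exp (s * X ω) ∂P)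
        ((∫ ω, X ω ^ (k + 1) * Real.exp (l * X ω) ∂P) / (∫ ω, Real.exp (l * X ω) ∂P) -
          ((∫ ω, X ω ^ 1 * Real.exp (l * X ω) ∂P) / (∫ ω, Real.exp (l * X ω) ∂P)) *
            ((∫ ω, X ω ^ k * Real.exp (l * X ω) ∂P) / (∫ ω, Real.exp (l * X ω) ∂P))) l ∧
      0 ≤ (∫ ω, X ω ^ (k + 1) * Real.exp (l * X ω) ∂P) / (∫ ω, Real.exp (l * X ω) ∂P) -
          ((∫ ω, X ω ^ 1 * Real.exp (l * X ω) ∂P) / (∫ ω, Real.exp (l * X ω) ∂P)) *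
            ((∫ ω, X ω ^ k * Real.exp (l * X ω) ∂P) / (∫ ω, Real.exp (l * X ω) ∂P)) :=
  deriv_in_l_general P X hX M hbdd k l
end

section
/- Let L ∈ [0,∞) and suppose E[X^m e^{LX}] < ∞ for every m ∈ ℕ. Then for any finite family of pairs (l_i, r_i), i ∈ I, with l_i ∈ [0,L] and r_i ∈ ℕ, one has ∏_{i∈I} G(l_i, r_i) ≤ G(L, ∑_{i∈I} r_i). -/
/-!
Both steps are Chebyshev's correlation inequality `∫ f w · ∫ g w ≤ ∫ f g w · ∫ w` for similarly
ordered `f, g` and a weight `w ≥ 0`. With `f = X^k`, `g = e^{(L-l)X}`, `w = e^{lX}` it shows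
that `G(l, k)` increases in `l`, so every factor may be replaced by `G(L, rᵢ)`; with `f = X^a`,
`g = X^b`, `w = e^{LX}` it gives `G(L, a) G(L, b) ≤ G(L, a + b)`, which merges the product into
`G(L, ∑ rᵢ)`.
-/

open MeasureTheory

theorem Monovary.integral_mul_integral_le_integral_mul_integral {Ω : Type*}
    [MeasurableSpace Ω] {P : Measure Ω} [SFinite P] {f g w : Ω → ℝ} (hfg : Monovary f g)
    (hw : ∀ ω, 0 ≤ w ω) (hw_int : Integrable w P) (hf : Integrable (fun ω => f ω * w ω) P)
    (hg : Integrable (fun ω => g ω * w ω) P)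
    (hfg_int : Integrable (fun ω => f ω * g ω * w ω) P) :
    (∫ ω, f ω * w ω ∂P) * ∫ ω, g ω * w ω ∂P ≤
      (∫ ω, f ω * g ω * w ω ∂P) * ∫ ω, w ω ∂P := by
  -- integrate the rearrangement inequality `f x g y + f y g x ≤ f x g x + f y g y` against `w ⊗ w`
  have key : ∫ p : Ω × Ω, (f p.1 * w p.1) * (g p.2 * w p.2) + (g p.1 * w p.1) * (f p.2 * w p.2)
        ∂P.prod P ≤
      ∫ p : Ω × Ω, (f p.1 * g p.1 * w p.1) * w p.2 + w p.1 * (f p.2 * g p.2 * w p.2)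
        ∂P.prod P := by
    refine integral_mono ((hf.mul_prod hg).add (hg.mul_prod hf))
      ((hfg_int.mul_prod hw_int).add (hw_int.mul_prod hfg_int)) fun p => ?_
    have := mul_le_mul_of_nonneg_right (monovary_iff_mul_rearrangement.1 hfg p.1 p.2)
      (mul_nonneg (hw p.1) (hw p.2))
    linarith
  rw [integral_add (hf.mul_prod hg) (hg.mul_prod hf),
    integral_add (hfg_int.mul_prod hw_int) (hw_int.mul_prod hfg_int),
    integral_prod_mul (fun ω => f ω * w ω) (fun ω => g ω * w ω),
    integral_prod_mul (fun ω => g ω * w ω) (fun ω => f ω * w ω),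
    integral_prod_mul (fun ω => f ω * g ω * w ω) w,
    integral_prod_mul w (fun ω => f ω * g ω * w ω)] at key
  linarith

theorem monovary_comp_of_monotoneOn {ι : Type*} {X : ι → ℝ} {s : Set ℝ} {φ ψ : ℝ → ℝ}
    (hφ : MonotoneOn φ s) (hψ : MonotoneOn ψ s) (hX : ∀ i, X i ∈ s) :
    Monovary (φ ∘ X) (ψ ∘ X) :=
  monovaryOn_univ.1 <| ((hφ.monovaryOn hψ).comp_right X).subset fun i _ => hX i

/-- The paper's `G(l, k)`: the `k`-th moment of `X` under the tilted law `e^{lX} dP / E[e^{lX}]`. -/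
noncomputable def tiltedMoment {Ω : Type*} [MeasurableSpace Ω] (P : Measure Ω) (X : Ω → ℝ)
    (l : ℝ) (k : ℕ) : ℝ :=
  (∫ ω, X ω ^ k * Real.exp (l * X ω) ∂P) / ∫ ω, Real.exp (l * X ω) ∂P

section TiltedMoment

variable {Ω : Type*} [MeasurableSpace Ω] {P : Measure Ω} {X : Ω → ℝ} {t L : ℝ}

theorem tiltedMoment_nonneg (hXnn : ∀ ω, 0 ≤ X ω) (l : ℝ) (k : ℕ) :
    0 ≤ tiltedMoment P X l k :=
  div_nonneg (integral_nonneg fun ω => mul_nonneg (pow_nonneg (hXnn ω) k) (Real.exp_pos _).le)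
    (integral_nonneg fun _ => (Real.exp_pos _).le)

theorem tiltedMoment_zero [NeZero P] (h : Integrable (fun ω => Real.exp (L * X ω)) P) :
    tiltedMoment P X L 0 = 1 := by
  simpa [tiltedMoment] using div_self (integral_exp_pos h).ne'

theorem integrable_pow_mul_exp_of_le (hX : Measurable X) (hXnn : ∀ ω, 0 ≤ X ω) (htL : t ≤ L)
    {k : ℕ} (h : Integrable (fun ω => X ω ^ k * Real.exp (L * X ω)) P) :
    Integrable (fun ω => X ω ^ k * Real.exp (t * X ω)) P := by
  refine h.mono (by fun_prop) (ae_of_all _ fun ω => ?_)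
  have hx := hXnn ω
  rw [Real.norm_of_nonneg (by positivity), Real.norm_of_nonneg (by positivity)]
  gcongr

theorem tiltedMoment_le_of_le [SFinite P] [NeZero P] (hX : Measurable X) (hXnn : ∀ ω, 0 ≤ X ω)
    (hint : ∀ m : ℕ, Integrable (fun ω => X ω ^ m * Real.exp (L * X ω)) P) (htL : t ≤ L)
    (k : ℕ) : tiltedMoment P X t k ≤ tiltedMoment P X L k := by
  have hint_t (m : ℕ) := integrable_pow_mul_exp_of_le hX hXnn htL (hint m)
  have hexp_t : Integrable (fun ω => Real.exp (t * X ω)) P := by simpa using hint_t 0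
  have hexp_L : Integrable (fun ω => Real.exp (L * X ω)) P := by simpa using hint 0
  have hexp (ω : Ω) : Real.exp ((L - t) * X ω) * Real.exp (t * X ω) = Real.exp (L * X ω) := by
    rw [← Real.exp_add]; ring_nf
  have key := (monovary_comp_of_monotoneOn pow_left_monotoneOn
      ((Real.exp_monotone.comp (monotone_id.const_mul (sub_nonneg.2 htL))).monotoneOn _)
      hXnn).integral_mul_integral_le_integral_mul_integral (P := P)
    (fun ω => (Real.exp_pos _).le) hexp_t (hint_t k)
    (by simpa only [Function.comp_apply, id, hexp] using hexp_L)
    (by simpa only [Function.comp_apply, id, mul_assoc, hexp] using hint k)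
  simp only [Function.comp_apply, id, mul_assoc, hexp] at key
  rw [tiltedMoment, tiltedMoment,
    div_le_div_iff₀ (integral_exp_pos hexp_t) (integral_exp_pos hexp_L)]
  exact key

theorem tiltedMoment_mul_le_tiltedMoment_add [SFinite P] [NeZero P] (hXnn : ∀ ω, 0 ≤ X ω)
    (hint : ∀ m : ℕ, Integrable (fun ω => X ω ^ m * Real.exp (L * X ω)) P) (a b : ℕ) :
    tiltedMoment P X L a * tiltedMoment P X L b ≤ tiltedMoment P X L (a + b) := by
  have hexp : Integrable (fun ω => Real.exp (L * X ω)) P := by simpa using hint 0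
  have hpos := integral_exp_pos hexp
  have key := (monovary_comp_of_monotoneOn pow_left_monotoneOn pow_left_monotoneOn
      hXnn).integral_mul_integral_le_integral_mul_integral (P := P)
    (fun ω => (Real.exp_pos _).le) hexp (hint a) (hint b)
    (by simpa only [Function.comp_apply, ← pow_add] using hint (a + b))
  simp only [Function.comp_apply, ← pow_add] at key
  calc tiltedMoment P X L a * tiltedMoment P X L b
      = ((∫ ω, X ω ^ a * Real.exp (L * X ω) ∂P) * ∫ ω, X ω ^ b * Real.exp (L * X ω) ∂P) /
          ((∫ ω, Real.exp (L * X ω) ∂P) * ∫ ω, Real.exp (L * X ω) ∂P) :=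
        div_mul_div_comm _ _ _ _
    _ ≤ ((∫ ω, X ω ^ (a + b) * Real.exp (L * X ω) ∂P) * ∫ ω, Real.exp (L * X ω) ∂P) /
          ((∫ ω, Real.exp (L * X ω) ∂P) * ∫ ω, Real.exp (L * X ω) ∂P) := by gcongr
    _ = tiltedMoment P X L (a + b) := mul_div_mul_right _ _ hpos.ne'

theorem prod_tiltedMoment_le_tiltedMoment_sum [SFinite P] [NeZero P] (hXnn : ∀ ω, 0 ≤ X ω)
    (hint : ∀ m : ℕ, Integrable (fun ω => X ω ^ m * Real.exp (L * X ω)) P)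
    {ι : Type*} (s : Finset ι) (r : ι → ℕ) :
    ∏ i ∈ s, tiltedMoment P X L (r i) ≤ tiltedMoment P X L (∑ i ∈ s, r i) := by
  classical
  induction s using Finset.induction_on with
  | empty => simp [tiltedMoment_zero (by simpa using hint 0)]
  | insert a s ha ih =>
    rw [Finset.prod_insert ha, Finset.sum_insert ha]
    exact (mul_le_mul_of_nonneg_left ih (tiltedMoment_nonneg hXnn _ _)).trans
      (tiltedMoment_mul_le_tiltedMoment_add hXnn hint _ _)

end TiltedMoment

theorem prod_le_G_sum_general {Ω : Type*} [MeasurableSpace Ω] (P : Measure Ω)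
    [IsProbabilityMeasure P] (X : Ω → ℝ) (hX : Measurable X) (hXnn : ∀ ω, 0 ≤ X ω)
    (L : ℝ)
    (hint : ∀ m : ℕ, Integrable (fun ω => X ω ^ m * Real.exp (L * X ω)) P)
    {ι : Type*} (s : Finset ι) (l : ι → ℝ) (r : ι → ℕ)
    (hl : ∀ i ∈ s, l i ∈ Set.Icc 0 L) :
    (∏ i ∈ s,
        (∫ ω, X ω ^ r i * Real.exp (l i * X ω) ∂P) / ∫ ω, Real.exp (l i * X ω) ∂P) ≤
      (∫ ω, X ω ^ (∑ i ∈ s, r i) * Real.exp (L * X ω) ∂P) /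
        ∫ ω, Real.exp (L * X ω) ∂P :=
  calc ∏ i ∈ s, tiltedMoment P X (l i) (r i)
      ≤ ∏ i ∈ s, tiltedMoment P X L (r i) :=
        Finset.prod_le_prod (fun _ _ => tiltedMoment_nonneg hXnn _ _)
          fun i hi => tiltedMoment_le_of_le hX hXnn hint (hl i hi).2 _
    _ ≤ tiltedMoment P X L (∑ i ∈ s, r i) := prod_tiltedMoment_le_tiltedMoment_sum hXnn hint s r

/-- For a nonnegative random variable `X` with all moments `E[X^m e^{LX}]` finite, and any
finite family of pairs `(lᵢ, rᵢ)` with `lᵢ ∈ [0,L]` and `rᵢ ∈ ℕ`, one has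
`∏ᵢ G(lᵢ, rᵢ) ≤ G(L, ∑ᵢ rᵢ)`, where `G(l,k) = E[X^k e^{lX}] / E[e^{lX}]`. -/
theorem prod_le_G_sum {Ω : Type*} [MeasurableSpace Ω] (P : Measure Ω)
    [IsProbabilityMeasure P] (X : Ω → ℝ) (hX : Measurable X) (hXnn : ∀ ω, 0 ≤ X ω)
    (L : ℝ) (hL : 0 ≤ L)
    (hint : ∀ m : ℕ, Integrable (fun ω => X ω ^ m * Real.exp (L * X ω)) P)
    {ι : Type*} (s : Finset ι) (l : ι → ℝ) (r : ι → ℕ)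
    (hl : ∀ i ∈ s, l i ∈ Set.Icc 0 L) :
    (∏ i ∈ s,
        (∫ ω, X ω ^ r i * Real.exp (l i * X ω) ∂P) / ∫ ω, Real.exp (l i * X ω) ∂P) ≤
      (∫ ω, X ω ^ (∑ i ∈ s, r i) * Real.exp (L * X ω) ∂P) /
        ∫ ω, Real.exp (L * X ω) ∂P :=
  prod_le_G_sum_general P X hX hXnn L hint s l r hl
end

section
/- Suppose H : (0,∞) → ℝ is bounded on every compact subset of (0,∞) and satisfies Assumption (DE) with parameter ρ for some ρ ∈ (0,∞). Then H(t) grows superlinearly: lim_{t→∞} H(t)/t = +∞. -/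
/-!
Put `g t = H t / t`. Assumption (DE) at `c = 1/2`, read at the point `2 t`, says
`g (2 t) - g t → ρ log 2 > 0`, so beyond some `T` every doubling of `t` raises `g` by at least
`ρ log 2 / 2`. Every `t ≥ T` is `2ⁿ s` with `s ∈ [T, 2T]`, where `g` is bounded below because `H`
is bounded on that compact interval, so `g (2ⁿ s) ≥ -C + n ρ log 2 / 2 → ∞`.
-/

open Filter Set Topology

lemma add_nat_mul_le_comp_pow_mul {g : ℝ → ℝ} {r a T C : ℝ} (hr : 1 < r) (hT : 0 < T)
    (hstep : ∀ t ≥ T, g t + a ≤ g (r * t)) (hC : ∀ s ∈ Icc T (r * T), C ≤ g s)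
    (n : ℕ) {s : ℝ} (hs : s ∈ Icc T (r * T)) : C + n * a ≤ g (r ^ n * s) := by
  induction n with
  | zero => simpa using hC s hs
  | succ n ih =>
    have hT_le : T ≤ r ^ n * s :=
      hs.1.trans (le_mul_of_one_le_left (hT.le.trans hs.1) (one_le_pow₀ hr.le))
    calc C + (n + 1 : ℕ) * a = (C + n * a) + a := by push_cast; ring
      _ ≤ g (r ^ n * s) + a := by gcongr
      _ ≤ g (r * (r ^ n * s)) := hstep _ hT_le
      _ = g (r ^ (n + 1) * s) := by rw [pow_succ', mul_assoc]

theorem tendsto_atTop_of_add_le_comp_mul {g : ℝ → ℝ} {r a T : ℝ} (hr : 1 < r) (ha : 0 < a)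
    (hT : 0 < T) (hstep : ∀ t ≥ T, g t + a ≤ g (r * t)) (hbdd : BddBelow (g '' Icc T (r * T))) :
    Tendsto g atTop atTop := by
  obtain ⟨C, hC⟩ := hbdd
  rw [mem_lowerBounds, forall_mem_image] at hC
  rw [tendsto_atTop]
  intro b
  obtain ⟨N, hN⟩ := exists_nat_ge ((b - C) / a)
  filter_upwards [eventually_ge_atTop (r ^ N * T)] with t ht
  have hrN : 1 ≤ r ^ N := one_le_pow₀ hr.le
  obtain ⟨m, hm, hm1⟩ := exists_nat_pow_near (x := t / T) (by rw [one_le_div hT]; nlinarith) hr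
  have hrm : 0 < r ^ m := pow_pos (zero_lt_one.trans hr) m
  have hs : t / r ^ m ∈ Icc T (r * T) := by
    rw [le_div_iff₀ hT] at hm
    rw [div_lt_iff₀ hT, pow_succ] at hm1
    constructor
    · rw [le_div_iff₀ hrm]; linarith
    · rw [div_le_iff₀ hrm]; nlinarith
  have hNm : N ≤ m := by
    have : r ^ N < r ^ (m + 1) :=
      calc r ^ N ≤ t / T := by rw [le_div_iff₀ hT]; exact ht
        _ < r ^ (m + 1) := hm1
    have := (pow_lt_pow_iff_right₀ hr).1 this
    omega
  calc b ≤ C + N * a := by rw [div_le_iff₀ ha] at hN; linarith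
    _ ≤ C + m * a := by gcongr
    _ ≤ g (r ^ m * (t / r ^ m)) := add_nat_mul_le_comp_pow_mul hr hT hstep hC m hs
    _ = g t := by rw [mul_div_cancel₀ _ hrm.ne']

lemma tendsto_div_self_comp_inv_mul_sub {H : ℝ → ℝ} {c L : ℝ} (hc : 0 < c)
    (h : Tendsto (fun t => (H (c * t) - c * H t) / t) atTop (𝓝 L)) :
    Tendsto (fun t => H (c⁻¹ * t) / (c⁻¹ * t) - H t / t) atTop (𝓝 (-c⁻¹ * L)) := by
  refine ((h.comp (tendsto_id.const_mul_atTop (inv_pos.2 hc))).const_mul (-c⁻¹)).congr' ?_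
  filter_upwards [eventually_gt_atTop 0] with t ht
  simp only [Function.comp_apply, id, mul_inv_cancel_left₀ hc.ne']
  field_simp
  ring

lemma bddBelow_image_div_self_Icc {H : ℝ → ℝ} {T S C : ℝ} (hT : 0 < T)
    (hC : ∀ t ∈ Icc T S, |H t| ≤ C) : BddBelow ((fun t => H t / t) '' Icc T S) := by
  refine ⟨-(|C| / T), forall_mem_image.2 fun t ht => ?_⟩
  have ht0 : 0 < t := hT.trans_le ht.1
  calc -(|C| / T) ≤ -(|C| / t) := by gcongr; exact ht.1
    _ ≤ -|H t / t| := by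
      rw [abs_div, abs_of_pos ht0]
      exact neg_le_neg <| div_le_div_of_nonneg_right ((hC t ht).trans (le_abs_self C)) ht0.le
    _ ≤ H t / t := neg_abs_le _

/-- If `H` is bounded on compact subsets of `(0,∞)` and satisfies Assumption (DE) with a
parameter `ρ ∈ (0,∞)`, then `H(t)/t → ∞` as `t → ∞`. -/
theorem DE_superlinear (H : ℝ → ℝ) (ρ : ℝ) (hρ : 0 < ρ)
    (hbdd : ∀ K : Set ℝ, K ⊆ Set.Ioi 0 → IsCompact K → ∃ C : ℝ, ∀ t ∈ K, |H t| ≤ C)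
    (hDE : ∀ c ∈ Set.Ioo (0 : ℝ) 1,
      Tendsto (fun t => (H (c * t) - c * H t) / t) atTop (nhds (ρ * c * Real.log c))) :
    Tendsto (fun t => H t / t) atTop atTop := by
  have hgain : 0 < ρ * Real.log 2 := mul_pos hρ (Real.log_pos one_lt_two)
  have hc : (2⁻¹ : ℝ) ∈ Ioo 0 1 := by norm_num
  have hdoubling : Tendsto (fun t => H (2 * t) / (2 * t) - H t / t) atTop
      (𝓝 (ρ * Real.log 2)) := by
    convert tendsto_div_self_comp_inv_mul_sub hc.1 (hDE _ hc) using 2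
    · rw [inv_inv]
    · rw [inv_inv, Real.log_inv]; ring
  obtain ⟨T, hT⟩ := eventually_atTop.1
    (hdoubling.eventually (lt_mem_nhds (half_lt_self hgain)))
  have hT₀ : 0 < max T 1 := zero_lt_one.trans_le (le_max_right T 1)
  obtain ⟨C, hC⟩ := hbdd (Icc (max T 1) (2 * max T 1))
    (fun t ht => hT₀.trans_le ht.1) isCompact_Icc
  refine tendsto_atTop_of_add_le_comp_mul one_lt_two (half_pos hgain) hT₀ (fun t ht => ?_)
    (bddBelow_image_div_self_Icc hT₀ hC)
  linarith [hT t ((le_max_left T 1).trans ht)]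
end

section
/- Suppose H : (0,∞) → ℝ is bounded on every compact subset of (0,∞) and satisfies Assumption (DE) with parameter ρ ∈ [0,∞). Then lim_{t→∞} H(t)/(t log t) = ρ; in particular, for every δ > 0 one has H(t) ≤ (ρ + δ) t log t for all sufficiently large t. -/
/-!
With `g t = H t / t - ρ log t`, Assumption (DE) at `c = 1/2` says exactly that
`g (2u) - g u → 0`. Once the increments are below `ε` beyond some `U`, climbing from the
window `[U, 2U]`, on which `g` is bounded, to `t` takes about `log t / log 2` doublings, so
`|g t| ≤ C + ε log t / log 2`. Hence `g = o(log t)`, which is `H t / (t log t) → ρ`.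
-/

open Filter Topology Asymptotics

def BoundedOnCompactsIoi (f : ℝ → ℝ) : Prop :=
  ∀ K : Set ℝ, K ⊆ Set.Ioi 0 → IsCompact K → ∃ C : ℝ, ∀ t ∈ K, |f t| ≤ C

section Doubling

variable {g : ℝ → ℝ} {a U C ε : ℝ}

lemma abs_le_of_abs_sub_comp_mul_le (ha : 1 ≤ a)
    (hstep : ∀ u ≥ U, |g (a * u) - g u| ≤ ε) (hC : ∀ t ∈ Set.Icc U (a * U), |g t| ≤ C) :
    ∀ n : ℕ, ∀ t ∈ Set.Icc U (a ^ (n + 1) * U), |g t| ≤ C + n * ε := by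
  intro n
  induction n with
  | zero => simpa using hC
  | succ n ih =>
    rintro t ⟨hUt, htn⟩
    have hε : 0 ≤ ε := (abs_nonneg _).trans (hstep U le_rfl)
    by_cases hlow : t ≤ a ^ (n + 1) * U
    · have := ih t ⟨hUt, hlow⟩
      push_cast
      linarith
    · rw [not_le] at hlow
      have ha0 : 0 < a := zero_lt_one.trans_le ha
      have hu : U ≤ t / a := by
        rw [le_div_iff₀ ha0]
        rcases le_or_gt 0 U with hU | hU
        · linarith [mul_le_mul_of_nonneg_right (le_self_pow₀ (n := n + 1) ha (by omega)) hU]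
        · nlinarith
      have hu' : t / a ≤ a ^ (n + 1) * U := by
        rw [div_le_iff₀ ha0]
        linarith [show a ^ (n + 1 + 1) * U = a ^ (n + 1) * U * a by ring]
      have hat : a * (t / a) = t := mul_div_cancel₀ t ha0.ne'
      have h1 := ih (t / a) ⟨hu, hu'⟩
      have h2 := hstep (t / a) hu
      rw [hat] at h2
      have := abs_sub_abs_le_abs_sub (g t) (g (t / a))
      push_cast
      linarith

lemma abs_le_add_mul_log_of_abs_sub_comp_mul_le (ha : 1 < a) (hU : 1 ≤ U)
    (hstep : ∀ u ≥ U, |g (a * u) - g u| ≤ ε) (hC : ∀ t ∈ Set.Icc U (a * U), |g t| ≤ C) :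
    ∀ t ≥ U, |g t| ≤ C + ε / Real.log a * Real.log t := by
  intro t ht
  have hU0 : 0 < U := zero_lt_one.trans_le hU
  have hε : 0 ≤ ε := (abs_nonneg _).trans (hstep U le_rfl)
  have hloga : 0 < Real.log a := Real.log_pos ha
  obtain ⟨n, han, hna⟩ := exists_nat_pow_near ((one_le_div hU0).2 ht) ha
  have hgt := abs_le_of_abs_sub_comp_mul_le ha.le hstep hC n t
    ⟨ht, ((div_lt_iff₀ hU0).1 hna).le⟩
  have hn : n * Real.log a ≤ Real.log t :=
    calc n * Real.log a = Real.log (a ^ n) := (Real.log_pow a n).symm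
      _ ≤ Real.log (t / U) := Real.log_le_log (pow_pos (zero_lt_one.trans ha) n) han
      _ = Real.log t - Real.log U := Real.log_div (hU0.trans_le ht).ne' hU0.ne'
      _ ≤ Real.log t := sub_le_self _ (Real.log_nonneg hU)
  have : n * ε ≤ ε / Real.log a * Real.log t := by
    rw [div_mul_eq_mul_div, le_div_iff₀ hloga]
    nlinarith
  linarith

lemma isLittleO_log_of_tendsto_sub_comp_mul (ha : 1 < a) (hg : BoundedOnCompactsIoi g)
    (hlim : Tendsto (fun u => g (a * u) - g u) atTop (𝓝 0)) : g =o[atTop] Real.log := by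
  refine IsLittleO.of_bound fun c hc => ?_
  have hloga : 0 < Real.log a := Real.log_pos ha
  obtain ⟨U₀, hU₀⟩ := Metric.tendsto_atTop.1 hlim (c * Real.log a / 2) (by positivity)
  set U := max U₀ 1
  have hstep : ∀ u ≥ U, |g (a * u) - g u| ≤ c * Real.log a / 2 := fun u hu => by
    simpa [Real.dist_eq] using (hU₀ u (le_of_max_le_left hu)).le
  obtain ⟨C, hC⟩ := hg (Set.Icc U (a * U))
    (fun t ht => zero_lt_one.trans_le ((le_max_right _ _).trans ht.1)) isCompact_Icc
  have hbound := abs_le_add_mul_log_of_abs_sub_comp_mul_le ha (le_max_right _ _) hstep hC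
  filter_upwards [eventually_ge_atTop U,
    Real.tendsto_log_atTop.eventually_ge_atTop (2 * C / c)] with t ht hlogt
  have hlog0 : 0 ≤ Real.log t := Real.log_nonneg ((le_max_right _ _).trans ht)
  rw [Real.norm_eq_abs, Real.norm_eq_abs, abs_of_nonneg hlog0]
  have hCt : C ≤ c / 2 * Real.log t := by
    rw [div_le_iff₀ hc] at hlogt
    linarith
  calc |g t| ≤ C + c * Real.log a / 2 / Real.log a * Real.log t := hbound t ht
    _ = C + c / 2 * Real.log t := by field_simp
    _ ≤ c * Real.log t := by linarith

end Doubling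

noncomputable def logCorrected (ρ : ℝ) (H : ℝ → ℝ) (t : ℝ) : ℝ :=
  H t / t - ρ * Real.log t

lemma BoundedOnCompactsIoi.logCorrected {H : ℝ → ℝ} (hH : BoundedOnCompactsIoi H) (ρ : ℝ) :
    BoundedOnCompactsIoi (logCorrected ρ H) := by
  intro K hK hKc
  obtain ⟨C, hC⟩ := hH K hK hKc
  obtain ⟨M, hM⟩ := hKc.exists_bound_of_continuousOn
    (continuousOn_inv₀.mono fun t ht => (hK ht).ne')
  obtain ⟨L, hL⟩ := hKc.exists_bound_of_continuousOn
    (Real.continuousOn_log.mono fun t ht => (hK ht).ne')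
  refine ⟨C * M + |ρ| * L, fun t ht => ?_⟩
  have hM' : |t⁻¹| ≤ M := hM t ht
  have hL' : |Real.log t| ≤ L := hL t ht
  calc |H t / t - ρ * Real.log t| ≤ |H t| * |t⁻¹| + |ρ| * |Real.log t| := by
        rw [div_eq_mul_inv, ← abs_mul, ← abs_mul]; exact abs_sub _ _
    _ ≤ C * M + |ρ| * L := by
        gcongr
        · exact (abs_nonneg _).trans (hC t ht)
        · exact hC t ht

lemma tendsto_logCorrected_inv_mul_sub {H : ℝ → ℝ} {ρ c : ℝ} (hc : 0 < c)
    (hDE : Tendsto (fun t => (H (c * t) - c * H t) / t) atTop (𝓝 (ρ * c * Real.log c))) :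
    Tendsto (fun u => logCorrected ρ H (c⁻¹ * u) - logCorrected ρ H u) atTop (𝓝 0) := by
  -- With `g = logCorrected ρ H`, `g (c t) - g t` is the (DE) quotient over `c`, minus `ρ log c`.
  have hdown : Tendsto (fun t => logCorrected ρ H (c * t) - logCorrected ρ H t) atTop (𝓝 0) := by
    have h := (hDE.div_const c).sub_const (ρ * Real.log c)
    rw [show ρ * c * Real.log c / c - ρ * Real.log c = 0 by field_simp; ring] at h
    refine h.congr' ?_
    filter_upwards [eventually_gt_atTop 0] with t ht
    simp only [logCorrected]
    rw [Real.log_mul hc.ne' ht.ne']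
    field_simp
    ring
  have h := (hdown.comp (tendsto_id.const_mul_atTop (inv_pos.2 hc))).neg
  rw [neg_zero] at h
  refine h.congr fun u => ?_
  simp [mul_inv_cancel_left₀ hc.ne']

theorem DE_t_log_t_asymptotics_general (H : ℝ → ℝ) (ρ : ℝ)
    (hbdd : ∀ K : Set ℝ, K ⊆ Set.Ioi 0 → IsCompact K → ∃ C : ℝ, ∀ t ∈ K, |H t| ≤ C)
    (hDE : ∀ c ∈ Set.Ioo (0 : ℝ) 1,
      Tendsto (fun t => (H (c * t) - c * H t) / t) atTop (nhds (ρ * c * Real.log c))) :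
    Tendsto (fun t => H t / (t * Real.log t)) atTop (nhds ρ) ∧
      ∀ δ > (0 : ℝ), ∀ᶠ t in atTop, H t ≤ (ρ + δ) * (t * Real.log t) := by
  have hdoubling := tendsto_logCorrected_inv_mul_sub (by norm_num) (hDE (1 / 2) (by norm_num))
  rw [one_div, inv_inv] at hdoubling
  have hlittleO : logCorrected ρ H =o[atTop] Real.log :=
    isLittleO_log_of_tendsto_sub_comp_mul one_lt_two
      (BoundedOnCompactsIoi.logCorrected hbdd ρ) hdoubling
  have hlim : Tendsto (fun t => H t / (t * Real.log t)) atTop (𝓝 ρ) := by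
    have h := hlittleO.tendsto_div_nhds_zero.add_const ρ
    rw [zero_add] at h
    refine h.congr' ?_
    filter_upwards [eventually_gt_atTop 1] with t ht
    have hlog := Real.log_pos ht
    simp only [logCorrected]
    field_simp
    ring
  refine ⟨hlim, fun δ hδ => ?_⟩
  filter_upwards [hlim.eventually (gt_mem_nhds (lt_add_of_pos_right ρ hδ)),
    eventually_gt_atTop 1] with t hlt ht
  have hpos : 0 < t * Real.log t := mul_pos (zero_lt_one.trans ht) (Real.log_pos ht)
  exact ((div_lt_iff₀ hpos).1 hlt).le

/-- If `H` is bounded on compact subsets of `(0,∞)` and satisfies Assumption (DE) with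
parameter `ρ ∈ [0,∞)`, then `H(t)/(t log t) → ρ`; in particular, for every `δ > 0`,
`H(t) ≤ (ρ + δ) t log t` for all sufficiently large `t`. -/
theorem DE_t_log_t_asymptotics (H : ℝ → ℝ) (ρ : ℝ) (hρ : 0 ≤ ρ)
    (hbdd : ∀ K : Set ℝ, K ⊆ Set.Ioi 0 → IsCompact K → ∃ C : ℝ, ∀ t ∈ K, |H t| ≤ C)
    (hDE : ∀ c ∈ Set.Ioo (0 : ℝ) 1,
      Tendsto (fun t => (H (c * t) - c * H t) / t) atTop (nhds (ρ * c * Real.log c))) :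
    Tendsto (fun t => H t / (t * Real.log t)) atTop (nhds ρ) ∧
      ∀ δ > (0 : ℝ), ∀ᶠ t in atTop, H t ≤ (ρ + δ) * (t * Real.log t) :=
  DE_t_log_t_asymptotics_general H ρ hbdd hDE
end

section
/- Suppose H : (0,∞) → ℝ satisfies Assumption (DE) with parameter ρ ∈ [0,∞). Then for every c ∈ (1,∞) one also has lim_{t→∞} (H(ct) − c H(t))/t = ρ c log c; that is, the limit relation of Assumption (DE) extends from c ∈ (0,1) to all c ∈ (0,∞). -/
open Filter

/-- If `H` satisfies Assumption (DE) with parameter `ρ` for `c ∈ (0,1)`, then the same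
limit relation holds for every `c ∈ (1,∞)` as well. -/
theorem DE_extends_beyond_one (H : ℝ → ℝ) (ρ : ℝ) (hρ : 0 ≤ ρ)
    (hDE : ∀ c ∈ Set.Ioo (0 : ℝ) 1,
      Tendsto (fun t => (H (c * t) - c * H t) / t) atTop (nhds (ρ * c * Real.log c))) :
    ∀ c ∈ Set.Ioi (1 : ℝ),
      Tendsto (fun t => (H (c * t) - c * H t) / t) atTop (nhds (ρ * c * Real.log c)) := by
  intro c hc
  have hc1 : (1 : ℝ) < c := hc
  have hc0 : (0 : ℝ) < c := lt_trans one_pos hc1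
  have hmem : (1 / c) ∈ Set.Ioo (0 : ℝ) 1 :=
    ⟨by positivity, by rw [div_lt_one hc0]; exact hc1⟩
  have h := hDE (1 / c) hmem
  -- compose with t ↦ c * t
  have hcomp : Tendsto (fun t : ℝ => c * t) atTop atTop :=
    Tendsto.const_mul_atTop hc0 tendsto_id
  have h2 := (h.comp hcomp).const_mul (-(c ^ 2))
  have key : Tendsto (fun t : ℝ =>
      -(c ^ 2) * ((H (1 / c * (c * t)) - 1 / c * H (c * t)) / (c * t)))
      atTop (nhds (-(c ^ 2) * (ρ * (1 / c) * Real.log (1 / c)))) := h2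
  have hval : -(c ^ 2) * (ρ * (1 / c) * Real.log (1 / c)) = ρ * c * Real.log c := by
    rw [Real.log_div one_ne_zero (ne_of_gt hc0), Real.log_one]
    field_simp
    ring
  rw [hval] at key
  refine key.congr' ?_
  filter_upwards [eventually_gt_atTop (0 : ℝ)] with t ht
  have hct : c * t ≠ 0 := by positivity
  have h1c : (1 / c) * (c * t) = t := by field_simp
  rw [h1c]
  field_simp
  ring
end

section
/- Suppose H : (0,∞) → ℝ and ρ ∈ [0,∞) are such that (H(ct) − c H(t))/t → ρ c log c as t → ∞, uniformly for c in compact subsets of (0,∞). Let q : (0,∞) → [1,∞) with q_t → 1 as t → ∞, and fix a > 0. Then (1/q_t) H(q_t · a · t) − H(a t) = o(t) as t → ∞; equivalently, exp((1/q_t) H(q_t a t)) = e^{H(at)} e^{o(t)}. -/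
open Filter

/-- If `(H(ct) − cH(t))/t → ρ c log c` uniformly for `c` in compact subsets of `(0,∞)`, and
`q_t ≥ 1` with `q_t → 1`, then for any `a > 0`,
`(1/q_t) H(q_t a t) − H(a t) = o(t)` as `t → ∞`. -/
theorem uniform_DE_small_perturbation (H : ℝ → ℝ) (ρ : ℝ) (hρ : 0 ≤ ρ)
    (hunif : ∀ K : Set ℝ, K ⊆ Set.Ioi 0 → IsCompact K →
      TendstoUniformlyOn (fun t c => (H (c * t) - c * H t) / t)
        (fun c => ρ * c * Real.log c) atTop K)
    (q : ℝ → ℝ) (hq1 : ∀ t, 1 ≤ q t) (hq : Tendsto q atTop (nhds 1))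
    (a : ℝ) (ha : 0 < a) :
    Tendsto (fun t => ((1 / q t) * H (q t * a * t) - H (a * t)) / t) atTop (nhds 0) := by
  have hqne : ∀ t, q t ≠ 0 := fun t => by have := hq1 t; linarith
  set K : Set ℝ := Set.Icc a (2 * a) with hKdef
  have hKsub : K ⊆ Set.Ioi 0 := fun x hx => lt_of_lt_of_le ha hx.1
  have hu := hunif K hKsub isCompact_Icc
  have hqa : Tendsto (fun t => q t * a) atTop (nhds a) := by
    simpa using hq.mul_const a
  have hmem : ∀ᶠ t in atTop, q t * a ∈ K := by
    filter_upwards [hq.eventually_lt_const (by norm_num : (1:ℝ) < 2)] with t h2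
    have h1 := hq1 t
    exact ⟨by nlinarith, by nlinarith⟩
  have hgcont : ContinuousWithinAt (fun c => ρ * c * Real.log c) K a :=
    (((continuousAt_const.mul continuousAt_id).mul
      (Real.continuousAt_log ha.ne'))).continuousWithinAt
  have hcomp : Tendsto (fun t => (H (q t * a * t) - q t * a * H t) / t) atTop
      (nhds (ρ * a * Real.log a)) :=
    hu.tendsto_comp hgcont (tendsto_nhdsWithin_iff.2 ⟨hqa, hmem⟩)
  have hat : Tendsto (fun t => (H (a * t) - a * H t) / t) atTop (nhds (ρ * a * Real.log a)) :=
    hu.tendsto_at ⟨le_refl a, by linarith⟩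
  have hqinv : Tendsto (fun t => 1 / q t) atTop (nhds 1) := by
    have := hq.inv₀ one_ne_zero
    simpa [one_div] using this
  have hmain := (hqinv.mul hcomp).sub hat
  rw [show (1 : ℝ) * (ρ * a * Real.log a) - ρ * a * Real.log a = 0 by ring] at hmain
  refine hmain.congr fun t => ?_
  rcases eq_or_ne t 0 with rfl | ht
  · simp
  · field_simp [hqne t]
    ring
end

section
/- For every ρ ∈ [0,∞) one has χ(ρ) < 1. In particular, since the Dirac mass δ₀ at 0 satisfies S(δ₀) = 2 and I(δ₀) = 0, one always has χ(ρ) ≤ 1, and the inequality is strict for every finite ρ. -/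
open scoped ENNReal


/-- `S(μ) = ∑_{x∈ℤ} (√μ(x+1) − √μ(x))²`. -/
noncomputable def Sfun (μ : ℤ → ℝ) : ℝ :=
  ∑' x : ℤ, (Real.sqrt (μ (x + 1)) - Real.sqrt (μ x)) ^ 2

/-- `I(μ) = −∑_{x∈ℤ} μ(x) log μ(x) ∈ [0,∞]` (with `0 log 0 = 0`). -/
noncomputable def Ifun (μ : ℤ → ℝ) : ℝ≥0∞ :=
  ∑' x : ℤ, ENNReal.ofReal (-(μ x * Real.log (μ x)))

/-- `μ` is a probability mass function on `ℤ`. -/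
def IsPMF (μ : ℤ → ℝ) : Prop := (∀ x, 0 ≤ μ x) ∧ HasSum μ 1

/-- `χ(ρ) = (1/2) inf_μ [S(μ) + ρ I(μ)]`, the infimum over probability mass functions on `ℤ`. -/
noncomputable def chi (ρ : ℝ≥0∞) : ℝ≥0∞ :=
  (1 / 2) * ⨅ (μ : ℤ → ℝ) (_ : IsPMF μ), (ENNReal.ofReal (Sfun μ) + ρ * Ifun μ)

/-!
Test the infimum against the two-point law `μ_p = (1 - p) δ₀ + p δ₁`: then
`S(μ_p) = 2 - 2√(p(1-p))` and `I(μ_p)` is the binary entropy `h(p)`. For `p = δ⁴` the gain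
`2√(p(1-p)) ≥ δ²` beats the entropy cost `ρ h(p) ≤ 4ρδ³` as soon as `4ρδ < 1`; both entropy terms
are bounded by `-x log x ≤ 1 - x`, applied to `x = 1 - p` and, after `log δ⁴ = 4 log δ`, to `x = δ`.
-/

open Real

lemma Sfun_nonneg (μ : ℤ → ℝ) : 0 ≤ Sfun μ :=
  tsum_nonneg fun _ => sq_nonneg _

lemma chi_le_of_isPMF (ρ : ℝ≥0∞) {μ : ℤ → ℝ} (hμ : IsPMF μ) :
    chi ρ ≤ 1 / 2 * (ENNReal.ofReal (Sfun μ) + ρ * Ifun μ) :=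
  mul_le_mul_right (iInf₂_le μ hμ) _

lemma chi_lt_one_of_isPMF {ρ : ℝ≥0∞} (hρ : ρ ≠ ⊤) {μ : ℤ → ℝ} (hμ : IsPMF μ) {I : ℝ}
    (hI0 : 0 ≤ I) (hI : Ifun μ = ENNReal.ofReal I) (hlt : Sfun μ + ρ.toReal * I < 2) :
    chi ρ < 1 := by
  have hcost : ENNReal.ofReal (Sfun μ) + ρ * Ifun μ < 2 := by
    rw [hI, ← ENNReal.ofReal_toReal hρ, ← ENNReal.ofReal_mul ENNReal.toReal_nonneg,
      ← ENNReal.ofReal_add (Sfun_nonneg μ) (by positivity)]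
    simpa using (ENNReal.ofReal_lt_ofReal_iff two_pos).2 hlt
  calc chi ρ ≤ 1 / 2 * (ENNReal.ofReal (Sfun μ) + ρ * Ifun μ) := chi_le_of_isPMF ρ hμ
    _ < 1 / 2 * 2 := by gcongr <;> simp
    _ = 1 := ENNReal.div_mul_cancel two_ne_zero ENNReal.ofNat_ne_top

noncomputable def twoPoint (p : ℝ) : ℤ → ℝ := Pi.single 0 (1 - p) + Pi.single 1 p

lemma twoPoint_apply_of_ne {p : ℝ} {x : ℤ} (h0 : x ≠ 0) (h1 : x ≠ 1) : twoPoint p x = 0 := by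
  simp [twoPoint, h0, h1]

lemma isPMF_twoPoint {p : ℝ} (h0 : 0 ≤ p) (h1 : p ≤ 1) : IsPMF (twoPoint p) := by
  refine ⟨fun x => ?_, sub_add_cancel (1 : ℝ) p ▸
    (hasSum_pi_single 0 (1 - p)).add (hasSum_pi_single 1 p)⟩
  by_cases hx0 : x = 0
  · simpa [twoPoint, hx0] using h1
  by_cases hx1 : x = 1
  · simpa [twoPoint, hx1] using h0
  exact (twoPoint_apply_of_ne hx0 hx1).ge

lemma Sfun_twoPoint {p : ℝ} (h0 : 0 ≤ p) (h1 : p ≤ 1) :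
    Sfun (twoPoint p) = 2 - 2 * (√p * √(1 - p)) := by
  rw [Sfun, tsum_eq_sum (s := {-1, 0, 1})]
  · simp only [Int.reduceNeg, twoPoint, Pi.add_apply, Finset.mem_insert, neg_eq_zero, one_ne_zero,
      Finset.mem_singleton, reduceCtorEq, or_self, not_false_eq_true, Finset.sum_insert,
      neg_add_cancel, Pi.single_eq_same, ne_eq, zero_ne_one, Pi.single_eq_of_ne, add_zero, sqrt_zero,
      sub_zero, zero_add, Finset.sum_singleton, Int.reduceAdd, OfNat.ofNat_ne_zero,
      OfNat.ofNat_ne_one, zero_sub, even_two, Even.neg_pow]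
    nlinarith [sq_sqrt h0, sq_sqrt (sub_nonneg.2 h1)]
  · intro x hx
    simp only [Finset.mem_insert, Finset.mem_singleton, not_or] at hx
    rw [twoPoint_apply_of_ne (by omega) (by omega), twoPoint_apply_of_ne hx.2.1 hx.2.2]
    simp

lemma Ifun_twoPoint {p : ℝ} (h0 : 0 ≤ p) (h1 : p ≤ 1) :
    Ifun (twoPoint p) = ENNReal.ofReal (binEntropy p) := by
  rw [Ifun, tsum_eq_sum (s := {0, 1}), binEntropy_eq_negMulLog_add_negMulLog_one_sub, add_comm,
    ENNReal.ofReal_add (negMulLog_nonneg (sub_nonneg.2 h1) (by linarith)) (negMulLog_nonneg h0 h1)]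
  · simp [twoPoint, negMulLog_eq_neg]
  · intro x hx
    simp only [Finset.mem_insert, Finset.mem_singleton, not_or] at hx
    simp [twoPoint_apply_of_ne hx.1 hx.2]

lemma negMulLog_pow_succ (x : ℝ) (n : ℕ) :
    negMulLog (x ^ (n + 1)) = (n + 1) * x ^ n * negMulLog x := by
  simp only [negMulLog, log_pow]
  push_cast
  ring

lemma binEntropy_pow_four_le {δ : ℝ} (h0 : 0 ≤ δ) (h1 : δ ≤ 1) :
    binEntropy (δ ^ 4) ≤ 4 * δ ^ 3 := by
  have hδ4 : δ ^ 4 ≤ δ ^ 3 := pow_le_pow_of_le_one h0 h1 (by norm_num)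
  have hsmall : negMulLog (δ ^ 4) ≤ 4 * δ ^ 3 * (1 - δ) := by
    have := mul_le_mul_of_nonneg_left (negMulLog_le_one_sub_self h0) (by positivity : 0 ≤ 4 * δ ^ 3)
    rw [negMulLog_pow_succ δ 3]
    push_cast
    linarith
  have hlarge := negMulLog_le_one_sub_self (x := 1 - δ ^ 4) (sub_nonneg.2 (pow_le_one₀ h0 h1))
  rw [binEntropy_eq_negMulLog_add_negMulLog_one_sub]
  nlinarith [pow_nonneg h0 3]

lemma Sfun_twoPoint_pow_four_le {δ : ℝ} (h0 : 0 ≤ δ) (h1 : δ ≤ 1 / 2) :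
    Sfun (twoPoint (δ ^ 4)) ≤ 2 - δ ^ 2 := by
  have hδ4 : δ ^ 4 ≤ 1 / 16 := by
    calc δ ^ 4 ≤ (1 / 2) ^ 4 := by gcongr
      _ = 1 / 16 := by norm_num
  have hsqrt_small : √(δ ^ 4) = δ ^ 2 := by
    rw [show δ ^ 4 = (δ ^ 2) ^ 2 by ring, sqrt_sq (by positivity)]
  have hsqrt_large : 1 / 2 ≤ √(1 - δ ^ 4) := le_sqrt_of_sq_le (by linarith)
  rw [Sfun_twoPoint (by positivity) (by linarith), hsqrt_small]
  nlinarith [sq_nonneg δ]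

lemma exists_Sfun_twoPoint_add_mul_binEntropy_lt_two {r : ℝ} (hr : 0 ≤ r) :
    ∃ p, 0 ≤ p ∧ p ≤ 1 ∧ Sfun (twoPoint p) + r * binEntropy p < 2 := by
  set δ : ℝ := 1 / (4 * r + 2)
  have hδ0 : 0 < δ := by positivity
  have hδ : δ ≤ 1 / 2 := one_div_le_one_div_of_le two_pos (by linarith)
  have hrδ : 4 * r * δ < 1 := by
    rw [mul_one_div, div_lt_one (by linarith)]
    linarith
  refine ⟨δ ^ 4, by positivity, pow_le_one₀ hδ0.le (by linarith), ?_⟩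
  calc Sfun (twoPoint (δ ^ 4)) + r * binEntropy (δ ^ 4)
      ≤ 2 - δ ^ 2 + r * (4 * δ ^ 3) :=
        add_le_add (Sfun_twoPoint_pow_four_le hδ0.le hδ)
          (mul_le_mul_of_nonneg_left (binEntropy_pow_four_le hδ0.le (by linarith)) hr)
    _ = 2 - δ ^ 2 * (1 - 4 * r * δ) := by ring
    _ < 2 := by linarith [mul_pos (pow_pos hδ0 2) (sub_pos.2 hrδ)]

/-- For every finite ρ one has χ(ρ) < 1. -/
theorem chi_lt_one (ρ : ℝ≥0∞) (hρ : ρ ≠ ⊤) : chi ρ < 1 := by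
  obtain ⟨p, hp0, hp1, hlt⟩ := exists_Sfun_twoPoint_add_mul_binEntropy_lt_two ENNReal.toReal_nonneg
  exact chi_lt_one_of_isPMF hρ (isPMF_twoPoint hp0 hp1) (binEntropy_nonneg hp0 hp1)
    (Ifun_twoPoint hp0 hp1) hlt
end

section
/- For every ρ ∈ (0,∞) one has χ(ρ) > 0; that is, the infimum over probability mass functions μ on ℤ of S(μ) + ρ I(μ) is strictly positive whenever ρ > 0. -/
open scoped ENNReal

lemma sq_sub_le_two_mul_add_mul_sq_sqrt_sub {a b : ℝ} (ha : 0 ≤ a) (hb : 0 ≤ b) :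
    (b - a) ^ 2 ≤ 2 * (a + b) * (Real.sqrt b - Real.sqrt a) ^ 2 := by
  have hsa := Real.sq_sqrt ha
  have hsb := Real.sq_sqrt hb
  have hfactor : (b - a) ^ 2 = (Real.sqrt b - Real.sqrt a) ^ 2 * (Real.sqrt b + Real.sqrt a) ^ 2 :=
    calc (b - a) ^ 2 = (Real.sqrt b ^ 2 - Real.sqrt a ^ 2) ^ 2 := by rw [hsa, hsb]
      _ = _ := by ring
  have hsum_sq : (Real.sqrt b + Real.sqrt a) ^ 2 ≤ 2 * (a + b) := by
    nlinarith [sq_nonneg (Real.sqrt b - Real.sqrt a)]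
  rw [hfactor, mul_comm (2 * (a + b))]
  exact mul_le_mul_of_nonneg_left hsum_sq (sq_nonneg _)

lemma summable_sq_sqrt_succ_sub {μ : ℤ → ℝ} (hμ : ∀ x, 0 ≤ μ x) (hs : Summable μ) :
    Summable fun x : ℤ => (Real.sqrt (μ (x + 1)) - Real.sqrt (μ x)) ^ 2 := by
  refine Summable.of_nonneg_of_le (fun x => sq_nonneg _) (fun x => ?_)
    ((hs.comp_injective (add_left_injective 1)).add hs)
  change _ ≤ μ (x + 1) + μ x
  have := Real.sq_sqrt (hμ (x + 1))
  have := Real.sq_sqrt (hμ x)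
  nlinarith [mul_nonneg (Real.sqrt_nonneg (μ (x + 1))) (Real.sqrt_nonneg (μ x))]

namespace IsPMF

variable {μ : ℤ → ℝ}

lemma add_succ_le_one (hμ : IsPMF μ) (x : ℤ) : μ x + μ (x + 1) ≤ 1 := by
  have := hμ.2.summable.sum_le_tsum {x, x + 1} (fun i _ => hμ.1 i)
  rwa [hμ.2.tsum_eq, Finset.sum_pair (by omega)] at this

lemma sq_sub_le_two_mul_Sfun (hμ : IsPMF μ) (x : ℤ) : (μ (x + 1) - μ x) ^ 2 ≤ 2 * Sfun μ := by
  have hterm : (Real.sqrt (μ (x + 1)) - Real.sqrt (μ x)) ^ 2 ≤ Sfun μ :=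
    (summable_sq_sqrt_succ_sub hμ.1 hμ.2.summable).le_tsum x fun _ _ => sq_nonneg _
  calc (μ (x + 1) - μ x) ^ 2
      ≤ 2 * (μ x + μ (x + 1)) * (Real.sqrt (μ (x + 1)) - Real.sqrt (μ x)) ^ 2 :=
        sq_sub_le_two_mul_add_mul_sq_sqrt_sub (hμ.1 x) (hμ.1 (x + 1))
    _ ≤ 2 * 1 * Sfun μ :=
        mul_le_mul (by linarith [hμ.add_succ_le_one x]) hterm (sq_nonneg _) (by norm_num)
    _ = 2 * Sfun μ := by ring

-- The entropy dominates the min-entropy `-log (max μ)`.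
lemma ofReal_neg_log_le_Ifun (hμ : IsPMF μ) {t : ℝ} (ht : ∀ x, μ x ≤ t) :
    ENNReal.ofReal (-Real.log t) ≤ Ifun μ := by
  have hpointwise (x : ℤ) : μ x * -Real.log t ≤ -(μ x * Real.log (μ x)) := by
    rcases (hμ.1 x).eq_or_lt with h0 | hpos
    · simp [← h0]
    · nlinarith [Real.log_le_log hpos (ht x)]
  calc ENNReal.ofReal (-Real.log t)
      = ∑' x, ENNReal.ofReal (μ x) * ENNReal.ofReal (-Real.log t) := by
        rw [ENNReal.tsum_mul_right, ← ENNReal.ofReal_tsum_of_nonneg hμ.1 hμ.2.summable,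
          hμ.2.tsum_eq, ENNReal.ofReal_one, one_mul]
    _ ≤ Ifun μ := by
        refine ENNReal.tsum_le_tsum fun x => ?_
        rw [← ENNReal.ofReal_mul (hμ.1 x)]
        exact ENNReal.ofReal_le_ofReal (hpointwise x)

lemma min_le_Sfun_add_mul_Ifun (hμ : IsPMF μ) (ρ : ℝ≥0∞) :
    min (ENNReal.ofReal (1 / 8)) (ρ * ENNReal.ofReal (-Real.log (3 / 4)))
      ≤ ENNReal.ofReal (Sfun μ) + ρ * Ifun μ := by
  by_cases hatom : ∃ x, 3 / 4 < μ x
  · obtain ⟨x, hx⟩ := hatom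
    have hjump : (1 / 2 : ℝ) ^ 2 ≤ (μ (x + 1) - μ x) ^ 2 := by
      have := hμ.add_succ_le_one x
      nlinarith [hμ.1 (x + 1)]
    have hS : 1 / 8 ≤ Sfun μ := by linarith [hμ.sq_sub_le_two_mul_Sfun x]
    exact (min_le_left _ _).trans <| (ENNReal.ofReal_le_ofReal hS).trans le_self_add
  · push Not at hatom
    exact (min_le_right _ _).trans <|
      (mul_le_mul_right (hμ.ofReal_neg_log_le_Ifun hatom) ρ).trans le_add_self

end IsPMF

theorem chi_pos_general (ρ : ℝ≥0∞) (hρ₀ : 0 < ρ) : 0 < chi ρ := by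
  have hbound_pos : 0 < min (ENNReal.ofReal (1 / 8)) (ρ * ENNReal.ofReal (-Real.log (3 / 4))) :=
    lt_min (by norm_num) <| ENNReal.mul_pos hρ₀.ne' <|
      (ENNReal.ofReal_pos.2 <| neg_pos.2 <| Real.log_neg (by norm_num) (by norm_num)).ne'
  have hbound_le := le_iInf₂ fun μ (hμ : IsPMF μ) => hμ.min_le_Sfun_add_mul_Ifun ρ
  exact (ENNReal.mul_pos (by norm_num) hbound_pos.ne').trans_le (mul_le_mul_right hbound_le _)

/-- For every ρ ∈ (0,∞) one has χ(ρ) > 0. -/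
theorem chi_pos (ρ : ℝ≥0∞) (hρ₀ : 0 < ρ) (hρ : ρ ≠ ⊤) : 0 < chi ρ :=
  chi_pos_general ρ hρ₀
end
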